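/- arXiv:math/0103079 — 4 statements merged into one kernel-verified Lean document; each statement's English description precedes it below -/
import Mathlib

section
/- Let Ā be a subgroup of A, let J̄ : Ā* → H⊗H be a dynamical twist for Ā, and let x : A* → H be a function with invertible values which has zero weight with respect to Ā and satisfies ε(x(λ)) = 1 for all λ. Define J^x : A* → H⊗H by J^x(λ) = Δ(x(λ)) · J̄(λ̄) · (x²(λ))^{-1} · (x¹(λ − h^{(2)}))^{-1}, where λ̄ ∈ Ā* is the restriction of the character λ to Ā. If J^x has zero weight with respect to A, then J^x is a dynamical twist for A. -/
open scoped TensorProduct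

noncomputable section

variable {H : Type*} [Ring H] [HopfAlgebra ℂ H]

/-- The character group `A* = Hom(A, ℂˣ)` of a subgroup `A ≤ Hˣ`, written additively. -/
abbrev DChar (A : Subgroup Hˣ) : Type _ := Additive (↥A →* ℂˣ)

/-- An element of a Hopf algebra is group-like if `Δ g = g ⊗ g` and `ε g = 1`. -/
def IsGroupLike (h : H) : Prop :=
  Coalgebra.comul (R := ℂ) h = h ⊗ₜ[ℂ] h ∧ Coalgebra.counit (R := ℂ) h = (1 : ℂ)

/-- The primitive idempotent `P_μ = |A|⁻¹ ∑_{a ∈ A} μ(a)⁻¹ a` of `ℂ[A] ⊆ H`. -/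
def dP (A : Subgroup Hˣ) [Fintype A] (μ : DChar A) : H :=
  (Fintype.card A : ℂ)⁻¹ • ∑ a : A, ((((Additive.toMul μ) a)⁻¹ : ℂˣ) : ℂ) • ((a : Hˣ) : H)

/-- A zero weight element of `H` (w.r.t. `A`): commutes with every `a ∈ A`. -/
def ZeroWeight₁ (A : Subgroup Hˣ) (v : H) : Prop :=
  ∀ a : A, v * ((a : Hˣ) : H) = ((a : Hˣ) : H) * v

/-- A zero weight element of `H ⊗ H` (w.r.t. `A`): commutes with every `a ⊗ a`, `a ∈ A`. -/
def ZeroWeight₂ (A : Subgroup Hˣ) (v : H ⊗[ℂ] H) : Prop :=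
  ∀ a : A, v * (((a : Hˣ) : H) ⊗ₜ[ℂ] ((a : Hˣ) : H))
    = (((a : Hˣ) : H) ⊗ₜ[ℂ] ((a : Hˣ) : H)) * v

/-- `J ↦ J^{12,3} = (Δ ⊗ id)(J)`. -/
def J12_3 : H ⊗[ℂ] H →ₐ[ℂ] (H ⊗[ℂ] H) ⊗[ℂ] H :=
  Algebra.TensorProduct.map (Bialgebra.comulAlgHom ℂ H) (AlgHom.id ℂ H)

/-- `J ↦ J^{1,23} = (id ⊗ Δ)(J)`, written in `(H ⊗ H) ⊗ H`. -/
def J1_23 : H ⊗[ℂ] H →ₐ[ℂ] (H ⊗[ℂ] H) ⊗[ℂ] H :=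
  ((Algebra.TensorProduct.assoc ℂ ℂ ℂ H H H).symm).toAlgHom.comp
    (Algebra.TensorProduct.map (AlgHom.id ℂ H) (Bialgebra.comulAlgHom ℂ H))

/-- `(ε ⊗ id) : H ⊗ H → H`. -/
def epsId : H ⊗[ℂ] H →ₐ[ℂ] H :=
  (Algebra.TensorProduct.lid ℂ H).toAlgHom.comp
    (Algebra.TensorProduct.map (Bialgebra.counitAlgHom ℂ H) (AlgHom.id ℂ H))

/-- `(id ⊗ ε) : H ⊗ H → H`. -/
def idEps : H ⊗[ℂ] H →ₐ[ℂ] H :=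
  (Algebra.TensorProduct.rid ℂ ℂ H).toAlgHom.comp
    (Algebra.TensorProduct.map (AlgHom.id ℂ H) (Bialgebra.counitAlgHom ℂ H))

/-- `x¹(λ - h⁽²⁾) = ∑_μ x(λ-μ) ⊗ P_μ`. -/
def x1shift (A : Subgroup Hˣ) [Fintype A] [Fintype (DChar A)]
    (x : DChar A → H) (lam : DChar A) : H ⊗[ℂ] H :=
  ∑ μ : DChar A, x (lam - μ) ⊗ₜ[ℂ] dP A μ

/-- A dynamical twist `J : A* → H ⊗ H`: a zero weight invertible-valued function satisfying
`J^{12,3}(λ) J^{12}(λ-h⁽³⁾) = J^{1,23}(λ) J^{23}(λ)` and `(ε⊗id)J = (id⊗ε)J = 1`. -/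
def IsDynamicalTwist (A : Subgroup Hˣ) [Fintype A] [Fintype (DChar A)]
    (J : DChar A → H ⊗[ℂ] H) : Prop :=
  (∀ lam, ZeroWeight₂ A (J lam)) ∧
  (∀ lam, IsUnit (J lam)) ∧
  (∀ lam : DChar A,
    J12_3 (J lam) * (∑ μ : DChar A, J (lam - μ) ⊗ₜ[ℂ] dP A μ)
      = J1_23 (J lam)
        * ((Algebra.TensorProduct.assoc ℂ ℂ ℂ H H H).symm ((1 : H) ⊗ₜ[ℂ] J lam))) ∧
  (∀ lam, epsId (J lam) = 1 ∧ idEps (J lam) = 1)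

/-- Restriction `λ ↦ λ̄` of a character of `A` to a subgroup `B ≤ A`. -/
def resChar {B A : Subgroup Hˣ} (hBA : B ≤ A) (lam : DChar A) : DChar B :=
  Additive.ofMul ((Additive.toMul lam).comp (Subgroup.inclusion hBA))

/-!
Since `A` is a finite abelian group of group-like elements, the `P_μ` are the character
projectors of `ℂ[A]`: orthogonal idempotents summing to `1`, with `ε(P_μ) = δ_{μ,0}` and
`Δ(P_μ) = ∑_ν P_{μ-ν} ⊗ P_ν`. Hence `F ↦ F(λ - h⁽ⁿ⁾)` is unital and multiplicative, and
`(id ⊗ Δ)(x¹(λ - h⁽²⁾)) = x¹(λ - h⁽²⁾ - h⁽³⁾)`. Expanding both sides of the shifted cocycle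
identity for `J^x` with these rules, the left side becomes
`Δ⁽²⁾(x(λ)) J̄^{12,3}(λ̄) J̄^{12}(λ̄ - h⁽³⁾) · R` and the right side
`Δ⁽²⁾(x(λ)) J̄^{1,23}(λ̄) J̄^{23}(λ̄) · R`, with
`R = (x³(λ))⁻¹ (x²(λ - h⁽³⁾))⁻¹ (x¹(λ - h⁽²⁾ - h⁽³⁾))⁻¹`. On the left, `(x³(λ))⁻¹` moves past
`J̄^{12}(λ̄ - h⁽³⁾)` because `x(λ)` has zero weight for `Ā`; on the right,
`(x¹(λ - h⁽²⁾ - h⁽³⁾))⁻¹` moves past `(J^x)^{23}(λ)` because `J^x(λ)` has zero weight for `A`.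
The cocycle identity for `J̄` and coassociativity then match the two sides.
-/

section General

open TensorProduct

theorem map_ringInverse {M N F : Type*} [MonoidWithZero M] [MonoidWithZero N] [FunLike F M N]
    [MonoidHomClass F M N] (f : F) {a : M} (ha : IsUnit a) :
    f (Ring.inverse a) = Ring.inverse (f a) := by
  rw [← one_mul (Ring.inverse (f a)), Ring.eq_mul_inverse_iff_mul_eq _ _ _ (ha.map f), ← map_mul,
    Ring.inverse_mul_cancel _ ha, map_one]

theorem Commute.ringInverse_left {M₀ : Type*} [MonoidWithZero M₀] {a b : M₀}
    (h : Commute a b) : Commute (Ring.inverse a) b := by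
  by_cases ha : IsUnit a
  · obtain ⟨u, rfl⟩ := ha
    rw [Ring.inverse_unit]
    exact h.units_inv_left
  · rw [Ring.inverse_non_unit a ha]
    exact Commute.zero_left b

theorem IsUnit.one_tmul {R S : Type*} [Ring R] [Ring S] [Algebra ℂ R] [Algebra ℂ S] {y : S}
    (hy : IsUnit y) : IsUnit ((1 : R) ⊗ₜ[ℂ] y) :=
  hy.map (Algebra.TensorProduct.includeRight (R := ℂ) (A := R))

end General

section CharProj

open Finset

theorem Units.coeHom_comp_eq_one_iff {G : Type*} [Group G] {χ : G →* ℂˣ} :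
    (Units.coeHom ℂ).comp χ = 1 ↔ χ = 1 :=
  ⟨fun h => MonoidHom.ext fun g => Units.ext (DFunLike.congr_fun h g), fun h => by subst h; rfl⟩

variable {G R : Type*} [Group G] [Fintype G] [Ring R] [Algebra ℂ R]

def charProj (f : G →* R) (χ : G →* ℂˣ) : R :=
  (Fintype.card G : ℂ)⁻¹ • ∑ g, (((χ g)⁻¹ : ℂˣ) : ℂ) • f g

open Classical in
theorem inv_card_mul_sum_char (χ : G →* ℂˣ) :
    (Fintype.card G : ℂ)⁻¹ * ∑ g, (χ g : ℂ) = if χ = 1 then 1 else 0 := by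
  split_ifs with hχ
  · subst hχ
    simp [Fintype.card_ne_zero]
  · rw [show ∑ g, (χ g : ℂ) = 0 from
      sum_hom_units_eq_zero ((Units.coeHom ℂ).comp χ) (mt Units.coeHom_comp_eq_one_iff.mp hχ),
      mul_zero]

open Classical in
theorem charProj_mul_of_forall_mul_eq (f : G →* R) (χ ψ : G →* ℂˣ) {y : R}
    (hy : ∀ g, f g * y = (ψ g : ℂ) • y) :
    charProj f χ * y = if χ = ψ then y else 0 := by
  have hsum : charProj f χ * y
      = ((Fintype.card G : ℂ)⁻¹ * ∑ g, ((χ⁻¹ * ψ) g : ℂ)) • y := by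
    simp only [charProj, smul_mul_assoc, sum_mul, hy, smul_smul, ← sum_smul,
      MonoidHom.mul_apply, MonoidHom.inv_apply, Units.val_mul]
  rw [hsum, inv_card_mul_sum_char]
  simp only [ite_smul, one_smul, zero_smul]
  refine if_congr ?_ rfl rfl
  simp only [MonoidHom.ext_iff, MonoidHom.mul_apply, MonoidHom.inv_apply, MonoidHom.one_apply,
    inv_mul_eq_one]

theorem mul_charProj (f : G →* R) (χ : G →* ℂˣ) (g : G) :
    f g * charProj f χ = (χ g : ℂ) • charProj f χ := by
  simp only [charProj, mul_smul_comm, mul_sum, ← map_mul f, smul_sum, smul_smul]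
  apply Fintype.sum_bijective (g * ·) (Group.mulLeft_bijective g)
  intro h
  rw [map_mul, map_mul, mul_inv_rev, Units.val_mul, Units.val_inv_eq_inv_val,
    Units.val_inv_eq_inv_val]
  congr 1
  field_simp

theorem map_charProj {S : Type*} [Ring S] [Algebra ℂ S] (φ : R →ₐ[ℂ] S) (f : G →* R)
    (χ : G →* ℂˣ) : φ (charProj f χ) = charProj ((φ : R →* S).comp f) χ := by
  simp [charProj, map_sum, map_smul]

theorem Commute.charProj_right {y : R} {f : G →* R} (h : ∀ g, Commute y (f g))
    (χ : G →* ℂˣ) : Commute y (charProj f χ) :=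
  ((Commute.sum_right _ _ _ fun g _ => (h g).smul_right _)).smul_right _

open Classical in
theorem sum_char_apply {G : Type*} [CommGroup G] [Fintype G] [Fintype (G →* ℂˣ)] (a : G) :
    ∑ χ : G →* ℂˣ, (χ a : ℂ) = if a = 1 then (Fintype.card G : ℂ) else 0 := by
  have : NeZero (Monoid.exponent G : ℂ) :=
    ⟨Nat.cast_ne_zero.mpr Monoid.exponent_ne_zero_of_finite⟩
  split_ifs with ha
  · subst ha
    obtain ⟨e⟩ := CommGroup.monoidHom_mulEquiv_of_hasEnoughRootsOfUnity G ℂ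
    simp [Fintype.card_congr e.toEquiv]
  · obtain ⟨φ, hφ⟩ := CommGroup.exists_apply_ne_one_of_hasEnoughRootsOfUnity G ℂ ha
    let eval : (G →* ℂˣ) →* ℂˣ := ⟨⟨fun χ => χ a, rfl⟩, fun _ _ => rfl⟩
    have heval : eval ≠ 1 := fun h => hφ (DFunLike.congr_fun h φ)
    exact sum_hom_units_eq_zero ((Units.coeHom ℂ).comp eval)
      (mt Units.coeHom_comp_eq_one_iff.mp heval)

theorem sum_charProj {G : Type*} [CommGroup G] [Fintype G] [Fintype (G →* ℂˣ)] (f : G →* R) :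
    ∑ χ : G →* ℂˣ, charProj f χ = 1 := by
  classical
  simp only [charProj, ← smul_sum]
  rw [sum_comm]
  simp only [← sum_smul, ← map_inv, sum_char_apply, inv_eq_one, ite_smul, zero_smul,
    sum_ite_eq', mem_univ, if_true, map_one, smul_smul]
  rw [inv_mul_cancel₀ (Nat.cast_ne_zero.mpr Fintype.card_ne_zero), one_smul]

end CharProj

section Idempotents

open Finset TensorProduct

variable {A : Subgroup Hˣ} [Fintype A]

theorem dP_eq_charProj (μ : DChar A) :
    dP A μ = charProj ((Units.coeHom H).comp A.subtype) μ.toMul := rfl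

theorem coe_mul_dP (a : A) (μ : DChar A) :
    ((a : Hˣ) : H) * dP A μ = (μ.toMul a : ℂ) • dP A μ :=
  mul_charProj ((Units.coeHom H).comp A.subtype) μ.toMul a

open Classical in
theorem dP_mul_dP_of_le {B : Subgroup Hˣ} [Fintype B] (hBA : B ≤ A) (ν : DChar B)
    (μ : DChar A) : dP B ν * dP A μ = if ν = resChar hBA μ then dP A μ else 0 :=
  charProj_mul_of_forall_mul_eq ((Units.coeHom H).comp B.subtype) ν.toMul _
    fun b => coe_mul_dP (Subgroup.inclusion hBA b) μ

open Classical in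
theorem dP_mul_dP (μ ν : DChar A) : dP A μ * dP A ν = if μ = ν then dP A ν else 0 :=
  dP_mul_dP_of_le le_rfl μ ν

theorem sum_dP [Fintype (DChar A)] (hA : ∀ a b : A, a * b = b * a) :
    ∑ μ : DChar A, dP A μ = 1 := by
  let _ : CommGroup A := { (inferInstance : Group A) with mul_comm := hA }
  let _ : Fintype (A →* ℂˣ) := Fintype.ofEquiv (DChar A) Additive.toMul
  rw [← sum_charProj ((Units.coeHom H).comp A.subtype)]
  exact Fintype.sum_equiv Additive.toMul _ _ fun _ => rfl

open Classical in
theorem counit_dP (hgl : ∀ a : A, IsGroupLike ((a : Hˣ) : H)) (μ : DChar A) :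
    Coalgebra.counit (R := ℂ) (dP A μ) = if μ = 0 then 1 else 0 := by
  have hε : ((Bialgebra.counitAlgHom ℂ H : H →* ℂ).comp ((Units.coeHom H).comp A.subtype)) = 1 :=
    MonoidHom.ext fun a => (hgl a).2
  rw [← Bialgebra.counitAlgHom_apply, dP_eq_charProj, map_charProj, hε, ← mul_one (charProj _ _),
    charProj_mul_of_forall_mul_eq 1 _ 1 fun _ => by simp]
  rfl

theorem comul_dP [Fintype (DChar A)] (hgl : ∀ a : A, IsGroupLike ((a : Hˣ) : H))
    (hA : ∀ a b : A, a * b = b * a) (μ : DChar A) :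
    Coalgebra.comul (R := ℂ) (dP A μ) = ∑ ν : DChar A, dP A (μ - ν) ⊗ₜ[ℂ] dP A ν := by
  classical
  have hΔ : ∀ ρ ν : DChar A, Coalgebra.comul (R := ℂ) (dP A μ) * (dP A ρ ⊗ₜ[ℂ] dP A ν)
      = if ρ = μ - ν then dP A ρ ⊗ₜ[ℂ] dP A ν else 0 := by
    intro ρ ν
    rw [← Bialgebra.comulAlgHom_apply, dP_eq_charProj, map_charProj,
      charProj_mul_of_forall_mul_eq _ _ (ρ + ν).toMul fun a => ?_]
    · refine if_congr ?_ rfl rfl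
      show μ = ρ + ν ↔ ρ = μ - ν
      constructor <;> rintro rfl <;> abel
    · change Coalgebra.comul (R := ℂ) ((a : Hˣ) : H) * _ = _
      rw [(hgl a).1, Algebra.TensorProduct.tmul_mul_tmul, coe_mul_dP, coe_mul_dP, smul_tmul_smul]
      rfl
  calc Coalgebra.comul (R := ℂ) (dP A μ)
      = Coalgebra.comul (R := ℂ) (dP A μ) * ((∑ ρ, dP A ρ) ⊗ₜ[ℂ] ∑ ν, dP A ν) := by
        rw [sum_dP hA, ← Algebra.TensorProduct.one_def, mul_one]
    _ = ∑ ν, dP A (μ - ν) ⊗ₜ[ℂ] dP A ν := by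
        simp only [sum_tmul, tmul_sum, mul_sum, hΔ, sum_ite_eq', mem_univ, if_true]

theorem ZeroWeight₁.commute_dP {v : H} (hv : ZeroWeight₁ A v) (μ : DChar A) :
    Commute v (dP A μ) :=
  Commute.charProj_right (f := (Units.coeHom H).comp A.subtype) hv _

theorem ZeroWeight₂.commute_comul_dP {v : H ⊗[ℂ] H} (hv : ZeroWeight₂ A v)
    (hgl : ∀ a : A, IsGroupLike ((a : Hˣ) : H)) (μ : DChar A) :
    Commute v (Coalgebra.comul (R := ℂ) (dP A μ)) := by
  rw [← Bialgebra.comulAlgHom_apply, dP_eq_charProj, map_charProj]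
  refine Commute.charProj_right (fun a => ?_) _
  simpa [Commute, SemiconjBy, Bialgebra.comulAlgHom_apply, (hgl a).1] using hv a

end Idempotents

section Shift

open Finset TensorProduct

variable {A : Subgroup Hˣ} [Fintype A] [Fintype (DChar A)] {R : Type*} [Ring R] [Algebra ℂ R]

/-- `shiftHom hA lam F` is `F(λ - h⁽ⁿ⁺¹⁾)` for `F : A* → H^{⊗n}`. -/
def shiftHom (hA : ∀ a b : A, a * b = b * a) (lam : DChar A) : (DChar A → R) →* R ⊗[ℂ] H where
  toFun F := ∑ μ, F (lam - μ) ⊗ₜ[ℂ] dP A μ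
  map_one' := by
    simp only [Pi.one_apply, ← tmul_sum, sum_dP hA, Algebra.TensorProduct.one_def]
  map_mul' F G := by
    classical
    simp only [Pi.mul_apply, sum_mul_sum, Algebra.TensorProduct.tmul_mul_tmul, dP_mul_dP,
      tmul_ite, sum_ite_eq, mem_univ, if_true]

variable (hA : ∀ a b : A, a * b = b * a) (lam : DChar A)

theorem shiftHom_apply (F : DChar A → R) :
    shiftHom hA lam F = ∑ μ, F (lam - μ) ⊗ₜ[ℂ] dP A μ := rfl

theorem x1shift_eq_shiftHom (x : DChar A → H) :
    x1shift A x lam = shiftHom hA lam x := rfl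

theorem isUnit_shiftHom {F : DChar A → R} (hF : ∀ ν, IsUnit (F ν)) :
    IsUnit (shiftHom hA lam F) :=
  (Pi.isUnit_iff.mpr hF).map _

theorem shiftHom_ringInverse {F : DChar A → R} (hF : ∀ ν, IsUnit (F ν)) :
    shiftHom hA lam (fun ν => Ring.inverse (F ν)) = Ring.inverse (shiftHom hA lam F) := by
  rw [← one_mul (Ring.inverse _), Ring.eq_mul_inverse_iff_mul_eq _ _ _ (isUnit_shiftHom hA lam hF),
    ← map_mul, ← map_one (shiftHom hA lam)]
  exact congrArg _ (funext fun ν => Ring.inverse_mul_cancel _ (hF ν))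

theorem shiftHom_comp_resChar {B : Subgroup Hˣ} [Fintype B] [Fintype (DChar B)] (hBA : B ≤ A)
    (F : DChar B → R) :
    shiftHom hA lam (fun ν => F (resChar hBA ν))
      = ∑ ν, F (resChar hBA lam - ν) ⊗ₜ[ℂ] dP B ν := by
  classical
  have hsplit : ∀ ν : DChar B, dP B ν = ∑ μ : DChar A, if ν = resChar hBA μ then dP A μ else 0 :=
    fun ν => by rw [← mul_one (dP B ν), ← sum_dP hA, mul_sum]; simp only [dP_mul_dP_of_le hBA]
  simp only [hsplit, tmul_sum, tmul_ite]
  rw [sum_comm]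
  simp only [sum_ite_eq', mem_univ, if_true]
  rfl

end Shift

section HopfMaps

open TensorProduct

def J23 : H ⊗[ℂ] H →ₐ[ℂ] (H ⊗[ℂ] H) ⊗[ℂ] H :=
  (Algebra.TensorProduct.assoc ℂ ℂ ℂ H H H).symm.toAlgHom.comp
    Algebra.TensorProduct.includeRight

theorem J23_apply (z : H ⊗[ℂ] H) :
    J23 z = (Algebra.TensorProduct.assoc ℂ ℂ ℂ H H H).symm ((1 : H) ⊗ₜ[ℂ] z) := rfl

theorem J12_3_tmul (y z : H) :
    J12_3 (y ⊗ₜ[ℂ] z) = Coalgebra.comul (R := ℂ) y ⊗ₜ[ℂ] z := rfl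

theorem J1_23_tmul (y z : H) :
    J1_23 (y ⊗ₜ[ℂ] z)
      = (Algebra.TensorProduct.assoc ℂ ℂ ℂ H H H).symm (y ⊗ₜ[ℂ] Coalgebra.comul (R := ℂ) z) := rfl

theorem epsId_tmul (y z : H) : epsId (y ⊗ₜ[ℂ] z) = Bialgebra.counitAlgHom ℂ H y • z := by
  simp [epsId, Algebra.smul_def]

theorem idEps_tmul (y z : H) : idEps (y ⊗ₜ[ℂ] z) = Bialgebra.counitAlgHom ℂ H z • y := by
  simp [idEps, Algebra.smul_def]

theorem J12_3_comul (h : H) :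
    J12_3 (Coalgebra.comul (R := ℂ) h) = J1_23 (Coalgebra.comul (R := ℂ) h) := by
  have h12 : (J12_3 (H := H)).toLinearMap = Coalgebra.comul.rTensor H :=
    TensorProduct.ext' fun _ _ => rfl
  have h1_23 : (J1_23 (H := H)).toLinearMap
      = (TensorProduct.assoc ℂ H H H).symm.toLinearMap ∘ₗ Coalgebra.comul.lTensor H :=
    TensorProduct.ext' fun _ _ => rfl
  rw [← AlgHom.toLinearMap_apply, h12, ← AlgHom.toLinearMap_apply, h1_23]
  simp

theorem epsId_comul (h : H) : epsId (Coalgebra.comul (R := ℂ) h) = h := by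
  have : (epsId (H := H)).toLinearMap
      = (TensorProduct.lid ℂ H).toLinearMap ∘ₗ Coalgebra.counit.rTensor H :=
    TensorProduct.ext' fun _ _ => rfl
  rw [← AlgHom.toLinearMap_apply, this]
  simp

theorem idEps_comul (h : H) : idEps (Coalgebra.comul (R := ℂ) h) = h := by
  have : (idEps (H := H)).toLinearMap
      = (TensorProduct.rid ℂ H).toLinearMap ∘ₗ Coalgebra.counit.lTensor H :=
    TensorProduct.ext' fun _ _ => rfl
  rw [← AlgHom.toLinearMap_apply, this]
  simp

theorem J12_3_one_tmul (y : H) : J12_3 ((1 : H) ⊗ₜ[ℂ] y) = (1 : H ⊗[ℂ] H) ⊗ₜ[ℂ] y := by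
  rw [J12_3_tmul, ← Bialgebra.comulAlgHom_apply, map_one]

theorem J1_23_one_tmul (y : H) : J1_23 ((1 : H) ⊗ₜ[ℂ] y) = J23 (Coalgebra.comul (R := ℂ) y) := rfl

theorem J23_one_tmul (y : H) : J23 ((1 : H) ⊗ₜ[ℂ] y) = (1 : H ⊗[ℂ] H) ⊗ₜ[ℂ] y := by
  rw [J23_apply, Algebra.TensorProduct.assoc_symm_tmul, Algebra.TensorProduct.one_def]

theorem commute_J23_J1_23_tmul {z : H ⊗[ℂ] H} {b : H} (h : Commute z (Coalgebra.comul (R := ℂ) b))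
    (a : H) : Commute (J23 z) (J1_23 (a ⊗ₜ[ℂ] b)) := by
  have hsplit : a ⊗ₜ[ℂ] Coalgebra.comul (R := ℂ) b
      = (a ⊗ₜ[ℂ] (1 : H ⊗[ℂ] H)) * ((1 : H) ⊗ₜ[ℂ] Coalgebra.comul (R := ℂ) b) := by
    rw [Algebra.TensorProduct.tmul_mul_tmul, mul_one, one_mul]
  rw [J23_apply, J1_23_tmul, hsplit]
  refine Commute.map (Commute.mul_right ?_ ?_) _
  · simp [Commute, SemiconjBy, Algebra.TensorProduct.tmul_mul_tmul]
  · exact h.map (Algebra.TensorProduct.includeRight (R := ℂ) (A := H))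

end HopfMaps

section VertexIRF

open Finset TensorProduct

variable {A : Subgroup Hˣ} [Fintype A] [Fintype (DChar A)]

theorem J12_3_shiftHom (hA : ∀ a b : A, a * b = b * a) (lam : DChar A) (F : DChar A → H) :
    J12_3 (shiftHom hA lam F) = shiftHom hA lam (fun ν => Coalgebra.comul (R := ℂ) (F ν)) := by
  simp only [shiftHom_apply, map_sum, J12_3_tmul]

theorem J23_shiftHom (hA : ∀ a b : A, a * b = b * a) (lam : DChar A) (F : DChar A → H) :
    J23 (shiftHom hA lam F) = shiftHom hA lam (fun ν => (1 : H) ⊗ₜ[ℂ] F ν) := by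
  simp only [shiftHom_apply, map_sum, J23_apply, Algebra.TensorProduct.assoc_symm_tmul]

theorem J1_23_shiftHom (hA : ∀ a b : A, a * b = b * a)
    (hgl : ∀ a : A, IsGroupLike ((a : Hˣ) : H)) (lam : DChar A) (F : DChar A → H) :
    J1_23 (shiftHom hA lam F) = shiftHom hA lam (fun ν => shiftHom hA ν F) := by
  simp only [shiftHom_apply, map_sum, J1_23_tmul, comul_dP hgl hA, tmul_sum,
    Algebra.TensorProduct.assoc_symm_tmul, sum_tmul]
  rw [sum_comm]
  refine sum_congr rfl fun ν _ => Fintype.sum_equiv (Equiv.subRight ν) _ _ fun μ => ?_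
  simp only [Equiv.subRight_apply]
  congr 3
  abel

theorem commute_one_tmul_sum_tmul_dP {B : Subgroup Hˣ} [Fintype B] [Fintype (DChar B)] {y : H}
    (hy : ZeroWeight₁ B y) (G : DChar B → H ⊗[ℂ] H) :
    Commute ((1 : H ⊗[ℂ] H) ⊗ₜ[ℂ] y) (∑ ν, G ν ⊗ₜ[ℂ] dP B ν) :=
  Commute.sum_right _ _ _ fun ν _ => by
    simp only [Commute, SemiconjBy, Algebra.TensorProduct.tmul_mul_tmul, one_mul, mul_one,
      (hy.commute_dP ν).eq]

theorem commute_J23_shiftHom_shiftHom (hA : ∀ a b : A, a * b = b * a) {z : H ⊗[ℂ] H}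
    (hz : ZeroWeight₂ A z) (hgl : ∀ a : A, IsGroupLike ((a : Hˣ) : H)) (lam : DChar A)
    (F : DChar A → H) :
    Commute (J23 z) (shiftHom hA lam (fun ν => shiftHom hA ν F)) := by
  rw [← J1_23_shiftHom hA hgl, shiftHom_apply, map_sum]
  exact Commute.sum_right _ _ _ fun μ _ => commute_J23_J1_23_tmul (hz.commute_comul_dP hgl μ) _

variable {B : Subgroup Hˣ}

def vertexIRF (hBA : B ≤ A) (Jbar : DChar B → H ⊗[ℂ] H) (x : DChar A → H) (lam : DChar A) :
    H ⊗[ℂ] H :=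
  Bialgebra.comulAlgHom ℂ H (x lam) * Jbar (resChar hBA lam)
    * Ring.inverse ((1 : H) ⊗ₜ[ℂ] x lam) * Ring.inverse (x1shift A x lam)

variable (hBA : B ≤ A) (Jbar : DChar B → H ⊗[ℂ] H) {x : DChar A → H}

theorem isUnit_vertexIRF (hA : ∀ a b : A, a * b = b * a) (hJu : ∀ ν, IsUnit (Jbar ν))
    (hxu : ∀ ν, IsUnit (x ν)) (lam : DChar A) : IsUnit (vertexIRF hBA Jbar x lam) :=
  ((((hxu lam).map _).mul (hJu _)).mul (isUnit_ringInverse.mpr (hxu lam).one_tmul)).mul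
    (isUnit_ringInverse.mpr (isUnit_shiftHom hA lam hxu))

theorem epsId_vertexIRF (hA : ∀ a b : A, a * b = b * a) (hJe : ∀ ν, epsId (Jbar ν) = 1)
    (hxu : ∀ ν, IsUnit (x ν)) (hxe : ∀ ν, Bialgebra.counitAlgHom ℂ H (x ν) = 1) (lam : DChar A) :
    epsId (vertexIRF hBA Jbar x lam) = 1 := by
  have hf : epsId (x1shift A x lam) = 1 := by
    simp only [x1shift, map_sum, epsId_tmul, hxe, one_smul, sum_dP hA]
  have hfu : IsUnit (x1shift A x lam) := isUnit_shiftHom hA lam hxu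
  rw [vertexIRF, map_mul, map_mul, map_mul, map_ringInverse _ (hxu lam).one_tmul,
    map_ringInverse _ hfu, hf, Bialgebra.comulAlgHom_apply, epsId_comul, hJe, epsId_tmul, map_one,
    one_smul, Ring.inverse_one, mul_one, mul_one, Ring.mul_inverse_cancel _ (hxu lam)]

theorem idEps_vertexIRF (hA : ∀ a b : A, a * b = b * a) (hgl : ∀ a : A, IsGroupLike ((a : Hˣ) : H))
    (hJe : ∀ ν, idEps (Jbar ν) = 1) (hxu : ∀ ν, IsUnit (x ν))
    (hxe : ∀ ν, Bialgebra.counitAlgHom ℂ H (x ν) = 1) (lam : DChar A) :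
    idEps (vertexIRF hBA Jbar x lam) = 1 := by
  classical
  have hf : idEps (x1shift A x lam) = x lam := by
    simp only [x1shift, map_sum, idEps_tmul, Bialgebra.counitAlgHom_apply, counit_dP hgl, ite_smul,
      one_smul, zero_smul, sum_ite_eq', mem_univ, if_true]
    exact congrArg x (sub_zero lam)
  have hfu : IsUnit (x1shift A x lam) := isUnit_shiftHom hA lam hxu
  rw [vertexIRF, map_mul, map_mul, map_mul, map_ringInverse _ (hxu lam).one_tmul,
    map_ringInverse _ hfu, hf, Bialgebra.comulAlgHom_apply, idEps_comul, hJe, idEps_tmul, hxe,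
    one_smul, Ring.inverse_one, mul_one, mul_one, Ring.mul_inverse_cancel _ (hxu lam)]

theorem J12_3_vertexIRF (hA : ∀ a b : A, a * b = b * a) (hxu : ∀ ν, IsUnit (x ν))
    (lam : DChar A) :
    J12_3 (vertexIRF hBA Jbar x lam)
      = J12_3 (Coalgebra.comul (R := ℂ) (x lam)) * J12_3 (Jbar (resChar hBA lam))
        * Ring.inverse ((1 : H ⊗[ℂ] H) ⊗ₜ[ℂ] x lam)
        * Ring.inverse (shiftHom hA lam fun ν => Coalgebra.comul (R := ℂ) (x ν)) := by
  rw [vertexIRF, x1shift_eq_shiftHom hA, map_mul, map_mul, map_mul,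
    map_ringInverse _ (hxu lam).one_tmul, map_ringInverse _ (isUnit_shiftHom hA lam hxu),
    J12_3_one_tmul, J12_3_shiftHom, Bialgebra.comulAlgHom_apply]

theorem shiftHom_vertexIRF [Fintype B] [Fintype (DChar B)] (hA : ∀ a b : A, a * b = b * a)
    (hxu : ∀ ν, IsUnit (x ν)) (lam : DChar A) :
    shiftHom hA lam (vertexIRF hBA Jbar x)
      = shiftHom hA lam (fun ν => Coalgebra.comul (R := ℂ) (x ν))
        * (∑ ν, Jbar (resChar hBA lam - ν) ⊗ₜ[ℂ] dP B ν)
        * Ring.inverse (shiftHom hA lam fun ν => (1 : H) ⊗ₜ[ℂ] x ν)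
        * Ring.inverse (shiftHom hA lam fun ν => shiftHom hA ν x) := by
  have hfactor : vertexIRF hBA Jbar x
      = (fun ν => Coalgebra.comul (R := ℂ) (x ν)) * (fun ν => Jbar (resChar hBA ν))
        * (fun ν => Ring.inverse ((1 : H) ⊗ₜ[ℂ] x ν))
        * (fun ν => Ring.inverse (shiftHom hA ν x)) := rfl
  rw [hfactor, map_mul, map_mul, map_mul, shiftHom_comp_resChar,
    shiftHom_ringInverse hA lam fun ν => (hxu ν).one_tmul,
    shiftHom_ringInverse hA lam fun ν => isUnit_shiftHom hA ν hxu]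

theorem J1_23_vertexIRF (hA : ∀ a b : A, a * b = b * a)
    (hgl : ∀ a : A, IsGroupLike ((a : Hˣ) : H)) (hxu : ∀ ν, IsUnit (x ν)) (lam : DChar A) :
    J1_23 (vertexIRF hBA Jbar x lam)
      = J1_23 (Coalgebra.comul (R := ℂ) (x lam)) * J1_23 (Jbar (resChar hBA lam))
        * Ring.inverse (J23 (Coalgebra.comul (R := ℂ) (x lam)))
        * Ring.inverse (shiftHom hA lam fun ν => shiftHom hA ν x) := by
  rw [vertexIRF, x1shift_eq_shiftHom hA, map_mul, map_mul, map_mul,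
    map_ringInverse _ (hxu lam).one_tmul, map_ringInverse _ (isUnit_shiftHom hA lam hxu),
    J1_23_one_tmul, J1_23_shiftHom hA hgl, Bialgebra.comulAlgHom_apply]

theorem J23_vertexIRF (hA : ∀ a b : A, a * b = b * a) (hxu : ∀ ν, IsUnit (x ν))
    (lam : DChar A) :
    J23 (vertexIRF hBA Jbar x lam)
      = J23 (Coalgebra.comul (R := ℂ) (x lam)) * J23 (Jbar (resChar hBA lam))
        * Ring.inverse ((1 : H ⊗[ℂ] H) ⊗ₜ[ℂ] x lam)
        * Ring.inverse (shiftHom hA lam fun ν => (1 : H) ⊗ₜ[ℂ] x ν) := by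
  rw [vertexIRF, x1shift_eq_shiftHom hA, map_mul, map_mul, map_mul,
    map_ringInverse _ (hxu lam).one_tmul, map_ringInverse _ (isUnit_shiftHom hA lam hxu),
    J23_one_tmul, J23_shiftHom, Bialgebra.comulAlgHom_apply]

theorem J12_3_vertexIRF_mul_shiftHom [Fintype B] [Fintype (DChar B)]
    (hA : ∀ a b : A, a * b = b * a) (hxu : ∀ ν, IsUnit (x ν)) (hxw : ∀ ν, ZeroWeight₁ B (x ν))
    (lam : DChar A) :
    J12_3 (vertexIRF hBA Jbar x lam) * shiftHom hA lam (vertexIRF hBA Jbar x)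
      = J12_3 (Coalgebra.comul (R := ℂ) (x lam))
        * (J12_3 (Jbar (resChar hBA lam)) * ∑ ν, Jbar (resChar hBA lam - ν) ⊗ₜ[ℂ] dP B ν)
        * Ring.inverse ((1 : H ⊗[ℂ] H) ⊗ₜ[ℂ] x lam)
        * Ring.inverse (shiftHom hA lam fun ν => (1 : H) ⊗ₜ[ℂ] x ν)
        * Ring.inverse (shiftHom hA lam fun ν => shiftHom hA ν x) := by
  have hc := (commute_one_tmul_sum_tmul_dP (hxw lam) fun ν => Jbar (resChar hBA lam - ν))
    |>.ringInverse_left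
  have hS : IsUnit (shiftHom hA lam fun ν => Coalgebra.comul (R := ℂ) (x ν)) :=
    isUnit_shiftHom hA lam fun ν => (hxu ν).map (Bialgebra.comulAlgHom ℂ H)
  rw [J12_3_vertexIRF hBA Jbar hA hxu, shiftHom_vertexIRF hBA Jbar hA hxu]
  simp only [mul_assoc, Ring.inverse_mul_cancel_left _ _ hS, hc.left_comm]

theorem J1_23_vertexIRF_mul_J23 (hA : ∀ a b : A, a * b = b * a)
    (hgl : ∀ a : A, IsGroupLike ((a : Hˣ) : H)) (hxu : ∀ ν, IsUnit (x ν))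
    (hzw : ∀ ν, ZeroWeight₂ A (vertexIRF hBA Jbar x ν)) (lam : DChar A) :
    J1_23 (vertexIRF hBA Jbar x lam) * J23 (vertexIRF hBA Jbar x lam)
      = J1_23 (Coalgebra.comul (R := ℂ) (x lam))
        * (J1_23 (Jbar (resChar hBA lam)) * J23 (Jbar (resChar hBA lam)))
        * Ring.inverse ((1 : H ⊗[ℂ] H) ⊗ₜ[ℂ] x lam)
        * Ring.inverse (shiftHom hA lam fun ν => (1 : H) ⊗ₜ[ℂ] x ν)
        * Ring.inverse (shiftHom hA lam fun ν => shiftHom hA ν x) := by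
  have hg := (commute_J23_shiftHom_shiftHom hA (hzw lam) hgl lam x).symm.ringInverse_left
  rw [J1_23_vertexIRF hBA Jbar hA hgl hxu, mul_assoc _ (Ring.inverse _) (J23 _), hg.eq,
    J23_vertexIRF hBA Jbar hA hxu]
  have hd : IsUnit (J23 (Coalgebra.comul (R := ℂ) (x lam))) :=
    ((hxu lam).map (Bialgebra.comulAlgHom ℂ H)).map J23
  simp only [mul_assoc, Ring.inverse_mul_cancel_left _ _ hd]

end VertexIRF

/-- **Proposition (vertex-IRF transformations).**
Let `Ā ≤ A`, let `J̄ : Ā* → H ⊗ H` be a dynamical twist for `Ā`, and let `x : A* → H` have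
invertible values, zero weight w.r.t. `Ā`, and `ε(x(λ)) = 1`.  If
`J^x(λ) = Δ(x(λ)) J̄(λ̄) (x²(λ))⁻¹ (x¹(λ-h⁽²⁾))⁻¹` has zero weight w.r.t. `A`, then `J^x` is a
dynamical twist for `A`. -/
theorem vertexIRF_transform_isDynamicalTwist
    {H : Type*} [Ring H] [HopfAlgebra ℂ H]
    (A B : Subgroup Hˣ) [Fintype A] [Fintype B]
    [Fintype (DChar A)] [Fintype (DChar B)]
    (hBA : B ≤ A)
    (hgl : ∀ a : A, IsGroupLike ((a : Hˣ) : H))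
    (hab : ∀ a b : A, a * b = b * a)
    (Jbar : DChar B → H ⊗[ℂ] H)
    (hJbar : IsDynamicalTwist B Jbar)
    (x : DChar A → H)
    (hxu : ∀ lam, IsUnit (x lam))
    (hxw : ∀ lam, ZeroWeight₁ B (x lam))
    (hxe : ∀ lam, Bialgebra.counitAlgHom ℂ H (x lam) = 1)
    (Jx : DChar A → H ⊗[ℂ] H)
    (hJx : ∀ lam, Jx lam =
      Bialgebra.comulAlgHom ℂ H (x lam) * Jbar (resChar hBA lam)
        * Ring.inverse ((1 : H) ⊗ₜ[ℂ] x lam)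
        * Ring.inverse (x1shift A x lam))
    (hzw : ∀ lam, ZeroWeight₂ A (Jx lam)) :
    IsDynamicalTwist A Jx := by
  obtain ⟨-, hJu, hJcocycle, hJe⟩ := hJbar
  obtain rfl : Jx = vertexIRF hBA Jbar x := funext hJx
  refine ⟨hzw, isUnit_vertexIRF hBA Jbar hab hJu hxu, fun lam => ?_, fun lam =>
    ⟨epsId_vertexIRF hBA Jbar hab (fun ν => (hJe ν).1) hxu hxe lam,
      idEps_vertexIRF hBA Jbar hab hgl (fun ν => (hJe ν).2) hxu hxe lam⟩⟩
  rw [← shiftHom_apply hab, ← J23_apply, J12_3_vertexIRF_mul_shiftHom hBA Jbar hab hxu hxw,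
    J1_23_vertexIRF_mul_J23 hBA Jbar hab hgl hxu hzw, hJcocycle, ← J23_apply, J12_3_comul]
end
end

section
/- Assume H is quasitriangular with universal R-matrix R ∈ H⊗H (R is invertible, R·Δ(h)·R^{-1} = Δ^{op}(h) for all h ∈ H, (Δ⊗id)R = R^{13}R^{23}, and (id⊗Δ)R = R^{13}R^{12}). Let Ā be a subgroup of A, let J̄ : Ā* → H⊗H be a dynamical twist for Ā, let J : A* → H⊗H be a dynamical twist for A, and let x : A* → H be a vertex-IRF transformation from J̄ to J, i.e. x has invertible values, zero weight with respect to Ā, ε(x(λ)) = 1, and J(λ) = Δ(x(λ)) · J̄(λ̄) · (x²(λ))^{-1} · (x¹(λ − h^{(2)}))^{-1} for all λ, where λ̄ is the restriction of λ to Ā. Define the dynamical R-matrices R(λ) = (J^{21}(λ))^{-1} R J(λ) and R̄(ν) = (J̄^{21}(ν))^{-1} R J̄(ν), where J^{21} = σ∘J with σ the flip of the two tensor factors. Then R(λ) = x²(λ − h^{(1)}) · x¹(λ) · R̄(λ̄) · (x²(λ))^{-1} · (x¹(λ − h^{(2)}))^{-1} for all λ ∈ A*. -/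
/-!
Write `J(λ) = Δ(x) J̄(λ̄) Y` with `Y = (x²(λ))⁻¹ (x¹(λ-h⁽²⁾))⁻¹`. Quasitriangularity says
`σ(Δ(x)) = R Δ(x) R⁻¹`, so in `J^{21}(λ)⁻¹ R J(λ)` the factor `Δ(x)` cancels against `R`,
leaving `σ(Y)⁻¹ R̄(λ̄) Y`; and `σ(Y)⁻¹ = x²(λ-h⁽¹⁾) x¹(λ)` because `σ` swaps the tensor factors.
-/

open scoped TensorProduct

noncomputable section

variable {H : Type*} [Ring H] [HopfAlgebra ℂ H]

/-- The flip `σ : H ⊗ H → H ⊗ H`. -/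
def flipT : H ⊗[ℂ] H ≃ₐ[ℂ] H ⊗[ℂ] H := Algebra.TensorProduct.comm ℂ H H

/-- `v ↦ v^{12}` for constant elements of `H ⊗ H`. -/
def emb12 : H ⊗[ℂ] H →ₐ[ℂ] (H ⊗[ℂ] H) ⊗[ℂ] H := Algebra.TensorProduct.includeLeft

/-- `v ↦ v^{13}` for constant elements of `H ⊗ H`. -/
def emb13 : H ⊗[ℂ] H →ₐ[ℂ] (H ⊗[ℂ] H) ⊗[ℂ] H :=
  Algebra.TensorProduct.map
    (Algebra.TensorProduct.includeLeft : H →ₐ[ℂ] H ⊗[ℂ] H) (AlgHom.id ℂ H)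

/-- `v ↦ v^{23}` for constant elements of `H ⊗ H`. -/
def emb23 : H ⊗[ℂ] H →ₐ[ℂ] (H ⊗[ℂ] H) ⊗[ℂ] H :=
  Algebra.TensorProduct.map
    (Algebra.TensorProduct.includeRight : H →ₐ[ℂ] H ⊗[ℂ] H) (AlgHom.id ℂ H)

theorem MonoidHom.map_inv_mul_mul_gauge {G : Type*} [Group G] (φ : G →* G) {r d : G}
    (hd : φ d = r * d * r⁻¹) (j u v : G) :
    (φ (d * j * u⁻¹ * v⁻¹))⁻¹ * r * (d * j * u⁻¹ * v⁻¹)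
      = φ v * φ u * ((φ j)⁻¹ * r * j) * u⁻¹ * v⁻¹ := by
  simp only [map_mul, map_inv, hd]
  group

theorem Ring.inverse_map_mul_mul_gauge {M : Type*} [MonoidWithZero M] (σ : M →* M)
    {r d j u v : M} (hr : IsUnit r) (hd : IsUnit d) (hj : IsUnit j) (hu : IsUnit u)
    (hv : IsUnit v) (hσd : σ d = r * d * Ring.inverse r) :
    Ring.inverse (σ (d * j * Ring.inverse u * Ring.inverse v)) * r
        * (d * j * Ring.inverse u * Ring.inverse v)
      = σ v * σ u * (Ring.inverse (σ j) * r * j) * Ring.inverse u * Ring.inverse v := by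
  obtain ⟨r, rfl⟩ := hr
  obtain ⟨d, rfl⟩ := hd
  obtain ⟨j, rfl⟩ := hj
  obtain ⟨u, rfl⟩ := hu
  obtain ⟨v, rfl⟩ := hv
  have hφd : Units.map σ d = r * d * r⁻¹ := by
    ext
    simpa [Ring.inverse_unit] using hσd
  simp only [Ring.inverse_unit, ← Units.val_mul, ← Units.coe_map σ]
  exact congrArg Units.val ((Units.map σ).map_inv_mul_mul_gauge hφd j u v)

theorem flipT_one_tmul (a : H) : flipT ((1 : H) ⊗ₜ[ℂ] a) = a ⊗ₜ[ℂ] (1 : H) := rfl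

theorem flipT_x1shift (A : Subgroup Hˣ) [Fintype A] [Fintype (DChar A)]
    (x : DChar A → H) (lam : DChar A) :
    flipT (x1shift A x lam) = ∑ μ : DChar A, dP A μ ⊗ₜ[ℂ] x (lam - μ) := by
  simp only [x1shift, map_sum]
  rfl

theorem vertexIRF_dynamical_R_matrices_general
    {H : Type*} [Ring H] [HopfAlgebra ℂ H]
    (A B : Subgroup Hˣ) [Fintype A] [Fintype B]
    [Fintype (DChar A)] [Fintype (DChar B)]
    (hBA : B ≤ A)
    -- quasitriangular structure
    (R : H ⊗[ℂ] H)
    (hRu : IsUnit R)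
    (hRΔ : ∀ h : H, R * Bialgebra.comulAlgHom ℂ H h * Ring.inverse R
      = flipT (Bialgebra.comulAlgHom ℂ H h))
    -- the twists
    (J : DChar A → H ⊗[ℂ] H)
    (hJ : IsDynamicalTwist A J)
    (Jbar : DChar B → H ⊗[ℂ] H)
    (hJbar : IsDynamicalTwist B Jbar)
    -- the vertex-IRF transformation
    (x : DChar A → H)
    (hxu : ∀ lam, IsUnit (x lam))
    (hJx : ∀ lam, J lam =
      Bialgebra.comulAlgHom ℂ H (x lam) * Jbar (resChar hBA lam)
        * Ring.inverse ((1 : H) ⊗ₜ[ℂ] x lam)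
        * Ring.inverse (x1shift A x lam)) :
    ∀ lam : DChar A,
      Ring.inverse (flipT (J lam)) * R * J lam
        = (∑ μ : DChar A, dP A μ ⊗ₜ[ℂ] x (lam - μ))
          * (x lam ⊗ₜ[ℂ] (1 : H))
          * (Ring.inverse (flipT (Jbar (resChar hBA lam))) * R * Jbar (resChar hBA lam))
          * Ring.inverse ((1 : H) ⊗ₜ[ℂ] x lam)
          * Ring.inverse (x1shift A x lam) := by
  intro lam
  have hΔx : IsUnit (Bialgebra.comulAlgHom ℂ H (x lam)) := (hxu lam).map _
  have hJbar_unit : IsUnit (Jbar (resChar hBA lam)) := hJbar.2.1 _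
  have hx2 : IsUnit ((1 : H) ⊗ₜ[ℂ] x lam) :=
    (hxu lam).map (Algebra.TensorProduct.includeRight : H →ₐ[ℂ] H ⊗[ℂ] H)
  have hshift : IsUnit (x1shift A x lam) := by
    have hJ_unit := hJ.2.1 lam
    rw [hJx lam] at hJ_unit
    exact isUnit_ringInverse.mp
      (((hΔx.mul hJbar_unit).mul hx2.ringInverse).mul_left_iff.mp hJ_unit)
  rw [hJx lam, ← flipT_x1shift, ← flipT_one_tmul]
  exact Ring.inverse_map_mul_mul_gauge (flipT (H := H)).toRingEquiv.toMonoidHom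
    hRu hΔx hJbar_unit hx2 hshift (hRΔ (x lam)).symm

/-- **Corollary (vertex-IRF transformations and dynamical R-matrices).**
Assume `H` is quasitriangular with universal R-matrix `R`.  If `x` is a vertex-IRF
transformation from a dynamical twist `J̄` on `Ā* ` to a dynamical twist `J` on `A*`, then the
associated dynamical R-matrices `R(λ) = J^{21}(λ)⁻¹ R J(λ)` and `R̄(ν) = J̄^{21}(ν)⁻¹ R J̄(ν)`
are related by
`R(λ) = x²(λ-h⁽¹⁾) x¹(λ) R̄(λ̄) (x²(λ))⁻¹ (x¹(λ-h⁽²⁾))⁻¹`. -/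
theorem vertexIRF_dynamical_R_matrices
    {H : Type*} [Ring H] [HopfAlgebra ℂ H]
    (A B : Subgroup Hˣ) [Fintype A] [Fintype B]
    [Fintype (DChar A)] [Fintype (DChar B)]
    (hBA : B ≤ A)
    (hgl : ∀ a : A, IsGroupLike ((a : Hˣ) : H))
    (hab : ∀ a b : A, a * b = b * a)
    -- quasitriangular structure
    (R : H ⊗[ℂ] H)
    (hRu : IsUnit R)
    (hRΔ : ∀ h : H, R * Bialgebra.comulAlgHom ℂ H h * Ring.inverse R
      = flipT (Bialgebra.comulAlgHom ℂ H h))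
    (hR1 : J12_3 R = emb13 R * emb23 R)
    (hR2 : J1_23 R = emb13 R * emb12 R)
    -- the twists
    (J : DChar A → H ⊗[ℂ] H)
    (hJ : IsDynamicalTwist A J)
    (Jbar : DChar B → H ⊗[ℂ] H)
    (hJbar : IsDynamicalTwist B Jbar)
    -- the vertex-IRF transformation
    (x : DChar A → H)
    (hxu : ∀ lam, IsUnit (x lam))
    (hxw : ∀ lam, ZeroWeight₁ B (x lam))
    (hxe : ∀ lam, Bialgebra.counitAlgHom ℂ H (x lam) = 1)
    (hJx : ∀ lam, J lam =
      Bialgebra.comulAlgHom ℂ H (x lam) * Jbar (resChar hBA lam)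
        * Ring.inverse ((1 : H) ⊗ₜ[ℂ] x lam)
        * Ring.inverse (x1shift A x lam)) :
    ∀ lam : DChar A,
      Ring.inverse (flipT (J lam)) * R * J lam
        = (∑ μ : DChar A, dP A μ ⊗ₜ[ℂ] x (lam - μ))
          * (x lam ⊗ₜ[ℂ] (1 : H))
          * (Ring.inverse (flipT (Jbar (resChar hBA lam))) * R * Jbar (resChar hBA lam))
          * Ring.inverse ((1 : H) ⊗ₜ[ℂ] x lam)
          * Ring.inverse (x1shift A x lam) :=
  vertexIRF_dynamical_R_matrices_general A B hBA R hRu hRΔ J hJ Jbar hJbar x hxu hJx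
end
end

section
/- Let B be an abelian group (written additively) and let F : B × B → B, written (λ, μ) ↦ F_λ(μ), be such that F_λ : B → B is a bijection for each λ ∈ B. Then F satisfies the functional equation F_λ(a + b) = F_λ(b) + F_{λ−b}(a) for all λ, a, b ∈ B if and only if there exists a bijective function f : B → B such that F_λ(μ) = f(λ) − f(λ−μ) for all λ, μ ∈ B. -/
/-!
Setting `a = λ - μ`, `b = μ` in the functional equation gives `F_λ(μ) = f(λ) - f(λ - μ)` with
`f(λ) = F_λ(λ)`; conversely such an `F` satisfies the equation by telescoping. Since
`F_0 = f(0) - f(-·)`, the map `f` is bijective exactly when `F_0` is.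
-/

open Function

theorem eq_diag_sub_diag_of_cocycle {G H : Type*} [AddGroup G] [AddGroup H] {F : G → G → H}
    (hF : ∀ lam a b : G, F lam (a + b) = F lam b + F (lam - b) a) (lam mu : G) :
    F lam mu = F lam lam - F (lam - mu) (lam - mu) := by
  refine eq_sub_of_add_eq ?_
  simpa only [sub_add_cancel] using (hF lam (lam - mu) mu).symm

theorem cocycle_of_eq_sub {G H : Type*} [AddCommGroup G] [AddGroup H] {F : G → G → H}
    {f : G → H} (hF : ∀ lam mu : G, F lam mu = f lam - f (lam - mu)) (lam a b : G) :
    F lam (a + b) = F lam b + F (lam - b) a := by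
  rw [hF, hF, hF, sub_add_sub_cancel, sub_sub, add_comm b]

theorem bijective_sub_comp_neg_iff {G H : Type*} [AddGroup G] [AddGroup H] (c : H) (f : G → H) :
    Bijective (fun x => c - f (-x)) ↔ Bijective f :=
  ((Equiv.neg G).bijective_comp _).trans ((Equiv.subLeft c).comp_bijective f)

/-- **Functional-equation core of the classification of vertex-IRF transformations.**
Let `B` be an abelian group and `F : B × B → B`, `(λ, μ) ↦ F_λ(μ)`, with each `F_λ` bijective.
Then `F_λ(a+b) = F_λ(b) + F_{λ-b}(a)` for all `λ, a, b` if and only if there is a bijection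
`f : B → B` with `F_λ(μ) = f(λ) - f(λ-μ)` for all `λ, μ`. -/
theorem cocycle_functional_equation_iff_exists_bijection
    {B : Type*} [AddCommGroup B] (F : B → B → B)
    (hbij : ∀ lam : B, Function.Bijective (F lam)) :
    (∀ lam a b : B, F lam (a + b) = F lam b + F (lam - b) a)
    ↔ ∃ f : B → B, Function.Bijective f ∧ ∀ lam mu : B, F lam mu = f lam - f (lam - mu) := by
  constructor
  · intro hF
    have hdiag := eq_diag_sub_diag_of_cocycle hF
    refine ⟨fun l => F l l, ?_, hdiag⟩
    have hF₀ : F 0 = fun mu => F 0 0 - F (-mu) (-mu) := by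
      funext mu
      simpa only [zero_sub] using hdiag 0 mu
    exact (bijective_sub_comp_neg_iff _ _).mp (hF₀ ▸ hbij 0)
  · rintro ⟨f, -, hf⟩
    exact cocycle_of_eq_sub hf
end

section
/- Let x₁, x₂ : A* → N_A with ε(x_i(λ)) = 1 both be vertex-IRF transformations of the trivial twist 1⊗1 (i.e. J_i(λ) := Δ(x_i(λ)) · (x_i²(λ))^{-1} · (x_i¹(λ − h^{(2)}))^{-1} has zero weight with respect to A for i = 1, 2). Then there exists a function y : A* → H with invertible values, of zero weight with respect to A and with ε(y(λ)) = 1, such that x₂(λ) = y(λ) · x₁(λ) for all λ (so that x₂ differs from x₁ by a gauge transformation and J₂ is gauge equivalent to J₁) if and only if π(x₁(λ)) = π(x₂(λ)) for all λ ∈ A*. -/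
/-!
Put `y = x₂ x₁⁻¹`. Conjugations by `x₁` and `x₂` agree on `P_μ` iff `z = x₂⁻¹ x₁` commutes
with `P_μ`. By Fourier inversion `a = ∑_μ μ(a) P_μ` on the finite abelian group `A` (orthogonality
of characters), the `P_μ` span `ℂ[A]`, so this holds for all `μ` iff `z` centralizes `ℂ[A]`. As
`y = x₁ z⁻¹ x₁⁻¹ = x₂ z⁻¹ x₂⁻¹` and the `xᵢ` normalize `ℂ[A]`, that is equivalent to `y` having
zero weight. The counit condition on `y` is automatic.
-/

open scoped TensorProduct

noncomputable section

variable {H : Type*} [Ring H] [HopfAlgebra ℂ H]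

/-- The group algebra `ℂ[A] ⊆ H`, the linear span of the subgroup `A ≤ Hˣ`. -/
def grpAlg (A : Subgroup Hˣ) : Submodule ℂ H :=
  Submodule.span ℂ (Set.range fun a : A => ((a : Hˣ) : H))

/-- `u` belongs to the normalizer `N_A` of `ℂ[A]` in `Hˣ`, i.e. `u ℂ[A] u⁻¹ = ℂ[A]`. -/
def MemNA (A : Subgroup Hˣ) (u : Hˣ) : Prop :=
  ∀ h : H, h ∈ grpAlg A ↔ (u : H) * h * ((u⁻¹ : Hˣ) : H) ∈ grpAlg A

section CharacterOrthogonality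

variable {G K : Type*} [CommGroup G] [Finite G] [CommRing K]
  [HasEnoughRootsOfUnity K (Monoid.exponent G)] [Fintype (G →* Kˣ)]

theorem sum_monoidHom_apply_of_ne_one [IsDomain K] {g : G} (hg : g ≠ 1) :
    ∑ χ : G →* Kˣ, (χ g : K) = 0 := by
  obtain ⟨ψ, hψ⟩ := CommGroup.exists_apply_ne_one_of_hasEnoughRootsOfUnity G K hg
  have hshift : ∑ χ : G →* Kˣ, (χ g : K) = (ψ g : K) * ∑ χ : G →* Kˣ, (χ g : K) := by
    rw [Finset.mul_sum]
    exact (Fintype.sum_equiv (Equiv.mulLeft ψ) _ _ fun χ => by simp).symm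
  have hψ' : (ψ g : K) ≠ 1 := fun h => hψ (Units.ext h)
  by_contra hS
  exact hψ' ((mul_eq_right₀ hS).mp hshift.symm)

theorem sum_monoidHom_apply_one :
    ∑ χ : G →* Kˣ, (χ 1 : K) = Nat.card G := by
  simp [← Nat.card_eq_fintype_card, CommGroup.card_monoidHom_of_hasEnoughRootsOfUnity]

end CharacterOrthogonality

theorem Units.commute_conj_iff {M : Type*} [Monoid M] (u : Mˣ) (a b : M) :
    Commute (u * a * ↑u⁻¹) (u * b * ↑u⁻¹) ↔ Commute a b := by
  simp only [Commute, SemiconjBy, mul_assoc, Units.inv_mul_cancel_left, Units.mul_right_inj]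
  simp only [← mul_assoc, Units.mul_left_inj]

theorem Units.conj_eq_conj_iff_commute {M : Type*} [Monoid M] (u v : Mˣ) (p : M) :
    u * p * ↑u⁻¹ = v * p * ↑v⁻¹ ↔ Commute ↑(v⁻¹ * u) p := by
  rw [Commute, SemiconjBy, Units.val_mul, ← Units.mul_left_inj u, ← Units.mul_right_inj v⁻¹]
  simp only [mul_assoc, Units.inv_mul, mul_one, Units.inv_mul_cancel_left]

section GroupAlgebra

variable (A : Subgroup Hˣ)

theorem dP_mem_grpAlg [Fintype A] (μ : DChar A) : dP A μ ∈ grpAlg A :=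
  Submodule.smul_mem _ _ <| Submodule.sum_mem _ fun a _ =>
    Submodule.smul_mem _ _ <| Submodule.subset_span ⟨a, rfl⟩

variable {A}

theorem ZeroWeight₁.commute_of_mem_grpAlg {v h : H} (hv : ZeroWeight₁ A v)
    (hh : h ∈ grpAlg A) : Commute v h := by
  induction hh using Submodule.span_induction with
  | mem x hx => obtain ⟨a, rfl⟩ := hx; exact hv a
  | zero => exact Commute.zero_right v
  | add x y _ _ hx hy => exact hx.add_right hy
  | smul c x _ hx => exact hx.smul_right c

theorem MemNA.inv_conj_mem {u : Hˣ} (hu : MemNA A u) {h : H} (hh : h ∈ grpAlg A) :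
    ↑u⁻¹ * h * u ∈ grpAlg A := by
  rw [hu]
  simpa only [mul_assoc, Units.mul_inv, mul_one, Units.mul_inv_cancel_left] using hh

theorem sum_smul_dP [Fintype A] [Fintype (DChar A)] (hab : ∀ a b : A, a * b = b * a) (a : A) :
    ∑ μ : DChar A, ((Additive.toMul μ a : ℂˣ) : ℂ) • dP A μ = ((a : Hˣ) : H) := by
  classical
  let : CommGroup A := { (inferInstance : Group A) with mul_comm := hab }
  let : Fintype (A →* ℂˣ) := ‹Fintype (DChar A)›
  have : NeZero (Monoid.exponent A : ℂ) :=
    ⟨Nat.cast_ne_zero.mpr Monoid.exponent_ne_zero_of_finite⟩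
  have hcard : (Fintype.card A : ℂ) ≠ 0 := Nat.cast_ne_zero.mpr Fintype.card_ne_zero
  have hcoeff : ∀ b : A,
      ∑ χ : A →* ℂˣ, (χ (a * b⁻¹) : ℂ) = if b = a then (Fintype.card A : ℂ) else 0 := by
    intro b
    split_ifs with hba
    · rw [hba, mul_inv_cancel, sum_monoidHom_apply_one, Nat.card_eq_fintype_card]
    · exact sum_monoidHom_apply_of_ne_one fun h => hba (mul_inv_eq_one.mp h).symm
  calc ∑ μ : DChar A, ((Additive.toMul μ a : ℂˣ) : ℂ) • dP A μ
      = ∑ b : A, ((Fintype.card A : ℂ)⁻¹ * ∑ χ : A →* ℂˣ, (χ (a * b⁻¹) : ℂ)) • ((b : Hˣ) : H) := by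
        simp only [dP, Finset.smul_sum, smul_smul, Finset.mul_sum, Finset.sum_smul]
        rw [Finset.sum_comm]
        refine Finset.sum_congr rfl fun b _ => Finset.sum_congr rfl fun χ _ => ?_
        change _ = ((Fintype.card A : ℂ)⁻¹ * ((Additive.toMul χ (a * b⁻¹) : ℂˣ) : ℂ)) • _
        rw [map_mul, map_inv, Units.val_mul, mul_left_comm]
    _ = ((a : Hˣ) : H) := by
        simp only [hcoeff, mul_ite, mul_zero, inv_mul_cancel₀ hcard, ite_smul, one_smul, zero_smul,
          Finset.sum_ite_eq', Finset.mem_univ, if_true]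

theorem zeroWeight₁_of_commute_dP [Fintype A] [Fintype (DChar A)]
    (hab : ∀ a b : A, a * b = b * a) {w : H} (hw : ∀ μ, Commute w (dP A μ)) :
    ZeroWeight₁ A w := fun a => by
  rw [← sum_smul_dP hab a]
  exact Commute.sum_right _ _ _ fun μ _ => (hw μ).smul_right _

theorem conj_dP_eq_of_zeroWeight₁ [Fintype A] {u w : Hˣ} (hu : MemNA A u)
    (hw : ZeroWeight₁ A w) (μ : DChar A) :
    ↑(w * u) * dP A μ * ↑(w * u)⁻¹ = u * dP A μ * ↑u⁻¹ := by
  have hc : Commute (w : H) (u * dP A μ * ↑u⁻¹) :=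
    hw.commute_of_mem_grpAlg ((hu _).mp (dP_mem_grpAlg A μ))
  calc ↑(w * u) * dP A μ * ↑(w * u)⁻¹ = w * (u * dP A μ * ↑u⁻¹) * ↑w⁻¹ := by
        simp only [mul_inv_rev, Units.val_mul, mul_assoc]
    _ = u * dP A μ * ↑u⁻¹ := by rw [hc.eq, mul_assoc, Units.mul_inv, mul_one]

theorem zeroWeight₁_mul_inv_of_conj_dP_eq [Fintype A] [Fintype (DChar A)]
    (hab : ∀ a b : A, a * b = b * a) {u v : Hˣ} (hv : MemNA A v)
    (h : ∀ μ, (u : H) * dP A μ * ↑u⁻¹ = v * dP A μ * ↑v⁻¹) : ZeroWeight₁ A ↑(v * u⁻¹) := by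
  have hz : ZeroWeight₁ A ↑(v⁻¹ * u) :=
    zeroWeight₁_of_commute_dP hab fun μ => (Units.conj_eq_conj_iff_commute u v _).mp (h μ)
  intro a
  have ha : ↑v⁻¹ * ((a : Hˣ) : H) * v ∈ grpAlg A :=
    hv.inv_conj_mem (Submodule.subset_span ⟨a, rfl⟩)
  have hc := (hz.commute_of_mem_grpAlg ha).units_inv_left
  show Commute _ _
  rw [← Units.commute_conj_iff v⁻¹, inv_inv]
  simpa only [mul_inv_rev, inv_inv, Units.val_mul, mul_assoc, Units.inv_mul_cancel_left,
    Units.mul_inv, mul_one] using hc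

end GroupAlgebra

theorem vertexIRF_gauge_equivalent_iff_same_permutation_general
    {H : Type*} [Ring H] [HopfAlgebra ℂ H]
    (A : Subgroup Hˣ) [Fintype A] [Fintype (DChar A)]
    (hab : ∀ a b : A, a * b = b * a)
    (x₁ x₂ : DChar A → Hˣ)
    (hxN₁ : ∀ lam, MemNA A (x₁ lam))
    (hxN₂ : ∀ lam, MemNA A (x₂ lam))
    (hxe₁ : ∀ lam, Bialgebra.counitAlgHom ℂ H ((x₁ lam : Hˣ) : H) = 1)
    (hxe₂ : ∀ lam, Bialgebra.counitAlgHom ℂ H ((x₂ lam : Hˣ) : H) = 1) :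
    (∃ y : DChar A → H,
      (∀ lam, IsUnit (y lam)) ∧
      (∀ lam, ZeroWeight₁ A (y lam)) ∧
      (∀ lam, Bialgebra.counitAlgHom ℂ H (y lam) = 1) ∧
      (∀ lam, ((x₂ lam : Hˣ) : H) = y lam * ((x₁ lam : Hˣ) : H)))
    ↔ (∀ lam (μ : DChar A),
        ((x₁ lam : Hˣ) : H) * dP A μ * (((x₁ lam)⁻¹ : Hˣ) : H)
          = ((x₂ lam : Hˣ) : H) * dP A μ * (((x₂ lam)⁻¹ : Hˣ) : H)) := by
  constructor
  · rintro ⟨y, hy_unit, hy_zw, -, hy⟩ lam μ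
    obtain ⟨w, hw⟩ := hy_unit lam
    have hx₂ : x₂ lam = w * x₁ lam := Units.ext (by rw [Units.val_mul, hw, hy])
    rw [hx₂, conj_dP_eq_of_zeroWeight₁ (hxN₁ lam) (hw ▸ hy_zw lam)]
  · intro hperm
    refine ⟨fun lam => ↑(x₂ lam * (x₁ lam)⁻¹), fun lam => Units.isUnit _,
      fun lam => zeroWeight₁_mul_inv_of_conj_dP_eq hab (hxN₂ lam) (hperm lam), fun lam => ?_,
      fun lam => by simp⟩
    beta_reduce
    rw [Units.val_mul, map_mul, map_units_inv, hxe₁, hxe₂, inv_one, mul_one]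

/-- **Theorem (gauge equivalence of vertex-IRF transformations of `1 ⊗ 1`).**
Two vertex-IRF transformations `x₁, x₂ : A* → N_A` of the trivial twist `1 ⊗ 1` differ by a
gauge transformation (an invertible-valued zero weight function `y : A* → H` with
`ε(y(λ)) = 1` and `x₂ = y x₁`) if and only if they induce the same permutations of `A*`,
i.e. conjugation by `x₁(λ)` and by `x₂(λ)` agree on all the idempotents `P_μ`. -/
theorem vertexIRF_gauge_equivalent_iff_same_permutation
    {H : Type*} [Ring H] [HopfAlgebra ℂ H]
    (A : Subgroup Hˣ) [Fintype A] [Fintype (DChar A)]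
    (hgl : ∀ a : A, IsGroupLike ((a : Hˣ) : H))
    (hab : ∀ a b : A, a * b = b * a)
    (x₁ x₂ : DChar A → Hˣ)
    (hxN₁ : ∀ lam, MemNA A (x₁ lam))
    (hxN₂ : ∀ lam, MemNA A (x₂ lam))
    (hxe₁ : ∀ lam, Bialgebra.counitAlgHom ℂ H ((x₁ lam : Hˣ) : H) = 1)
    (hxe₂ : ∀ lam, Bialgebra.counitAlgHom ℂ H ((x₂ lam : Hˣ) : H) = 1)
    (hzw₁ : ∀ lam, ZeroWeight₂ A
      (Bialgebra.comulAlgHom ℂ H ((x₁ lam : Hˣ) : H)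
        * Ring.inverse ((1 : H) ⊗ₜ[ℂ] ((x₁ lam : Hˣ) : H))
        * Ring.inverse (x1shift A (fun ν => ((x₁ ν : Hˣ) : H)) lam)))
    (hzw₂ : ∀ lam, ZeroWeight₂ A
      (Bialgebra.comulAlgHom ℂ H ((x₂ lam : Hˣ) : H)
        * Ring.inverse ((1 : H) ⊗ₜ[ℂ] ((x₂ lam : Hˣ) : H))
        * Ring.inverse (x1shift A (fun ν => ((x₂ ν : Hˣ) : H)) lam))) :
    (∃ y : DChar A → H,
      (∀ lam, IsUnit (y lam)) ∧
      (∀ lam, ZeroWeight₁ A (y lam)) ∧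
      (∀ lam, Bialgebra.counitAlgHom ℂ H (y lam) = 1) ∧
      (∀ lam, ((x₂ lam : Hˣ) : H) = y lam * ((x₁ lam : Hˣ) : H)))
    ↔ (∀ lam (μ : DChar A),
        ((x₁ lam : Hˣ) : H) * dP A μ * (((x₁ lam)⁻¹ : Hˣ) : H)
          = ((x₂ lam : Hˣ) : H) * dP A μ * (((x₂ lam)⁻¹ : Hˣ) : H)) :=
  vertexIRF_gauge_equivalent_iff_same_permutation_general A hab x₁ x₂ hxN₁ hxN₂ hxe₁ hxe₂
end
end
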